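/- Let R be the category whose objects are quadruples (A, B, ε, μ) with A a finite distributive ⟨∨,0⟩-semilattice, B a finite Boolean ⟨∨,0⟩-semilattice, ε : A → B and μ : B → A ⟨∨,0⟩-homomorphisms with μ ∘ ε = id_A, and whose morphisms (A,B,ε,μ) → (A',B',ε',μ') are pairs (f,g) with f : A → A' and g : B → B' ⟨∨,0⟩-embeddings satisfying g ∘ ε = ε' ∘ f and μ' ∘ g = f ∘ μ. Let Π : R → D be the projection functor to the category D of finite distributive ⟨∨,0⟩-semilattices with ⟨∨,0⟩-embeddings, sending (A,B,ε,μ) to A and (f,g) to f. Then Π has neither a right adjoint nor a left adjoint. -/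

import Mathlib

universe u

open CategoryTheory

/-- A join-semilattice is distributive if whenever `c ≤ a ⊔ b` there are
`x ≤ a` and `y ≤ b` with `c = x ⊔ y`. -/
def SupDistrib (α : Type*) [SemilatticeSup α] : Prop :=
  ∀ a b c : α, c ≤ a ⊔ b → ∃ x y, x ≤ a ∧ y ≤ b ∧ c = x ⊔ y

/-- A `⟨∨,0⟩`-homomorphism: preserves binary joins and the least element. -/
def IsSupBotHom {α β : Type*} [SemilatticeSup α] [OrderBot α] [SemilatticeSup β] [OrderBot β]
    (f : α → β) : Prop :=
  (∀ a b : α, f (a ⊔ b) = f a ⊔ f b) ∧ f ⊥ = ⊥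

/-- A `⟨∨,0⟩`-embedding: an injective `⟨∨,0⟩`-homomorphism. -/
def IsSupBotEmb {α β : Type*} [SemilatticeSup α] [OrderBot α] [SemilatticeSup β] [OrderBot β]
    (f : α → β) : Prop :=
  Function.Injective f ∧ IsSupBotHom f

theorem isSupBotEmb_id {α : Type*} [SemilatticeSup α] [OrderBot α] :
    IsSupBotEmb (id : α → α) :=
  ⟨Function.injective_id, fun _ _ => rfl, rfl⟩

theorem IsSupBotEmb.comp {α β γ : Type*} [SemilatticeSup α] [OrderBot α]
    [SemilatticeSup β] [OrderBot β] [SemilatticeSup γ] [OrderBot γ]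
    {g : β → γ} {f : α → β} (hg : IsSupBotEmb g) (hf : IsSupBotEmb f) :
    IsSupBotEmb (g ∘ f) :=
  ⟨hg.1.comp hf.1,
    fun a b => by simp only [Function.comp_apply, hf.2.1, hg.2.1],
    by simp only [Function.comp_apply, hf.2.2, hg.2.2]⟩

/-- Bundled finite distributive `⟨∨,0⟩`-semilattices. -/
structure FDSemilat : Type 1 where
  carrier : Type
  [instSup : SemilatticeSup carrier]
  [instBot : OrderBot carrier]
  [instFin : Finite carrier]
  distrib : SupDistrib carrier

attribute [instance] FDSemilat.instSup FDSemilat.instBot FDSemilat.instFin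

instance : CoeSort FDSemilat Type := ⟨FDSemilat.carrier⟩

/-- The category `D` of finite distributive `⟨∨,0⟩`-semilattices with
`⟨∨,0⟩`-embeddings as morphisms. -/
instance : Category FDSemilat where
  Hom A B := { f : A → B // IsSupBotEmb f }
  id A := ⟨id, isSupBotEmb_id⟩
  comp f g := ⟨g.1 ∘ f.1, g.2.comp f.2⟩

/-- Bundled finite Boolean `⟨∨,0⟩`-semilattices. -/
structure FBSemilat : Type 1 where
  carrier : Type
  [instSup : SemilatticeSup carrier]
  [instBot : OrderBot carrier]
  [instFin : Finite carrier]
  boolean : ∃ n : ℕ, Nonempty (carrier ≃o Finset (Fin n))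

attribute [instance] FBSemilat.instSup FBSemilat.instBot FBSemilat.instFin

instance : CoeSort FBSemilat Type := ⟨FBSemilat.carrier⟩

/-- Objects of the category `R`: quadruples `(A, B, ε, μ)` where `A` is a finite
distributive `⟨∨,0⟩`-semilattice, `B` is a finite Boolean `⟨∨,0⟩`-semilattice,
`ε : A → B` and `μ : B → A` are `⟨∨,0⟩`-homomorphisms with `μ ∘ ε = id`. -/
structure RObj : Type 1 where
  A : FDSemilat
  B : FBSemilat
  ε : A → B
  μ : B → A
  hε : IsSupBotHom ε
  hμ : IsSupBotHom μ
  retr : μ ∘ ε = id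

/-- Morphisms of `R`: pairs `(f, g)` of `⟨∨,0⟩`-embeddings making both squares commute. -/
instance : Category RObj where
  Hom P Q := { fg : (P.A → Q.A) × (P.B → Q.B) //
    IsSupBotEmb fg.1 ∧ IsSupBotEmb fg.2 ∧
      fg.2 ∘ P.ε = Q.ε ∘ fg.1 ∧ Q.μ ∘ fg.2 = fg.1 ∘ P.μ }
  id P := ⟨(id, id), isSupBotEmb_id, isSupBotEmb_id, rfl, rfl⟩
  comp {P Q R} f g := ⟨(g.1.1 ∘ f.1.1, g.1.2 ∘ f.1.2),
    g.2.1.comp f.2.1, g.2.2.1.comp f.2.2.1,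
    by
      have h1 := f.2.2.2.1
      have h2 := g.2.2.2.1
      calc (g.1.2 ∘ f.1.2) ∘ P.ε = g.1.2 ∘ (f.1.2 ∘ P.ε) := rfl
        _ = g.1.2 ∘ (Q.ε ∘ f.1.1) := by rw [h1]
        _ = (g.1.2 ∘ Q.ε) ∘ f.1.1 := rfl
        _ = (R.ε ∘ g.1.1) ∘ f.1.1 := by rw [h2]
        _ = R.ε ∘ (g.1.1 ∘ f.1.1) := rfl,
    by
      have h1 := f.2.2.2.2
      have h2 := g.2.2.2.2
      calc R.μ ∘ (g.1.2 ∘ f.1.2) = (R.μ ∘ g.1.2) ∘ f.1.2 := rfl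
        _ = (g.1.1 ∘ Q.μ) ∘ f.1.2 := by rw [h2]
        _ = g.1.1 ∘ (Q.μ ∘ f.1.2) := rfl
        _ = g.1.1 ∘ (f.1.1 ∘ P.μ) := by rw [h1]
        _ = (g.1.1 ∘ f.1.1) ∘ P.μ := rfl⟩

/-- The projection functor `Π : R ⥤ D`, sending `(A,B,ε,μ)` to `A` and `(f,g)` to `f`. -/
def projR : RObj ⥤ FDSemilat where
  obj P := P.A
  map f := ⟨f.1.1, f.2.1⟩

/-!
A right adjoint `G` would give, for every `n`, a morphism `(1, 2ⁿ, 0, 0) → G 1` in `R`, hence an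
embedding of `2ⁿ` into the fixed finite semilattice `(G 1).B`, which is impossible for
`n = |(G 1).B|`.

For a left adjoint `G`, let `Q = G C` for the three-element chain `C`. The unit embeds `C`
into `Q.A`, and the morphism `Q → (C, 2², ε₀, μ₀)` adjoint to `id_C` embeds `Q.A` into `C`, so
`|Q.A| = 3`. The morphism `Q → (2², 2², id, id)` adjoint to the inclusion `C ↪ 2²` forces
`μ_Q` to be injective; being also surjective (it is a retraction of `ε_Q`), it is a bijection
`Q.B ≃ Q.A`. So the Boolean semilattice `Q.B` would have three elements.
-/

theorem supDistrib_of_distribLattice (α : Type*) [DistribLattice α] : SupDistrib α :=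
  fun a b c h => ⟨c ⊓ a, c ⊓ b, inf_le_right, inf_le_right, by
    rw [← inf_sup_left, inf_eq_left.mpr h]⟩

theorem two_pow_ne_three (n : ℕ) : 2 ^ n ≠ 3 := by
  rcases n with _ | n
  · decide
  · intro h
    have h_even : Even (2 ^ (n + 1)) := Nat.even_pow.2 ⟨even_two, n.succ_ne_zero⟩
    rw [h] at h_even
    exact absurd h_even (by decide)

namespace FDSemilat

def of (α : Type) [DistribLattice α] [OrderBot α] [Finite α] : FDSemilat :=
  { carrier := α, distrib := supDistrib_of_distribLattice α }

def point : FDSemilat := of Unit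

noncomputable def chain3 : FDSemilat := of (Fin 3)

def square : FDSemilat := of (Finset (Fin 2))

end FDSemilat

namespace FBSemilat

def powerset (n : ℕ) : FBSemilat :=
  { carrier := Finset (Fin n), boolean := ⟨n, ⟨OrderIso.refl _⟩⟩ }

theorem natCard_powerset (n : ℕ) : Nat.card (powerset n) = 2 ^ n := by
  simp [powerset, Nat.card_eq_fintype_card]

theorem exists_natCard_eq_two_pow (B : FBSemilat) : ∃ n, Nat.card B = 2 ^ n := by
  obtain ⟨n, ⟨e⟩⟩ := B.boolean
  exact ⟨n, (Nat.card_congr e.toEquiv).trans (natCard_powerset n)⟩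

end FBSemilat

namespace RObj

variable {P Q : RObj}

theorem leftInverse_μ_ε (P : RObj) : Function.LeftInverse P.μ P.ε :=
  congrFun P.retr

theorem natCard_A_le_of_hom (u : P ⟶ Q) : Nat.card P.A ≤ Nat.card Q.A :=
  Nat.card_le_card_of_injective _ u.2.1.1

theorem natCard_B_le_of_hom (u : P ⟶ Q) : Nat.card P.B ≤ Nat.card Q.B :=
  Nat.card_le_card_of_injective _ u.2.2.1.1

theorem injective_μ_of_hom (u : P ⟶ Q) (hQ : Function.Injective Q.μ) :
    Function.Injective P.μ := by
  have h : Function.Injective (Q.μ ∘ u.1.2) := hQ.comp u.2.2.1.1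
  rw [u.2.2.2.2] at h
  exact h.of_comp

theorem natCard_B_eq_natCard_A (hμ : Function.Injective P.μ) : Nat.card P.B = Nat.card P.A :=
  Nat.card_congr (Equiv.ofBijective P.μ ⟨hμ, P.leftInverse_μ_ε.surjective⟩)

def overPoint (n : ℕ) : RObj where
  A := FDSemilat.point
  B := FBSemilat.powerset n
  ε := fun _ => ⊥
  μ := fun _ => ⊥
  hε := ⟨fun _ _ => (sup_idem _).symm, rfl⟩
  hμ := ⟨fun _ _ => (sup_idem _).symm, rfl⟩
  retr := rfl

def square : RObj where
  A := FDSemilat.square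
  B := FBSemilat.powerset 2
  ε := id
  μ := id
  hε := ⟨fun _ _ => rfl, rfl⟩
  hμ := ⟨fun _ _ => rfl, rfl⟩
  retr := rfl

def chainToSquare : Fin 3 → Finset (Fin 2) := ![∅, {0}, {0, 1}]

def squareToChain (s : Finset (Fin 2)) : Fin 3 :=
  if 1 ∈ s then 2 else if 0 ∈ s then 1 else 0

theorem isSupBotEmb_chainToSquare : IsSupBotEmb chainToSquare :=
  ⟨by decide, by decide, by decide⟩

theorem isSupBotHom_squareToChain : IsSupBotHom squareToChain :=
  ⟨by decide, by decide⟩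

theorem leftInverse_squareToChain_chainToSquare :
    Function.LeftInverse squareToChain chainToSquare := by
  decide

noncomputable def chain3 : RObj where
  A := FDSemilat.chain3
  B := FBSemilat.powerset 2
  ε := chainToSquare
  μ := squareToChain
  hε := isSupBotEmb_chainToSquare.2
  hμ := isSupBotHom_squareToChain
  retr := funext leftInverse_squareToChain_chainToSquare

end RObj

theorem not_exists_rightAdjoint_projR : ¬ ∃ G : FDSemilat ⥤ RObj, Nonempty (projR ⊣ G) := by
  rintro ⟨G, ⟨adj⟩⟩
  set m := Nat.card (G.obj FDSemilat.point).B
  have u : RObj.overPoint m ⟶ G.obj FDSemilat.point := adj.homEquiv _ _ (𝟙 FDSemilat.point)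
  have h_le : 2 ^ m ≤ m :=
    (FBSemilat.natCard_powerset m).symm.trans_le (RObj.natCard_B_le_of_hom u)
  exact Nat.lt_two_pow_self.not_ge h_le

theorem not_exists_leftAdjoint_projR : ¬ ∃ G : FDSemilat ⥤ RObj, Nonempty (G ⊣ projR) := by
  rintro ⟨G, ⟨adj⟩⟩
  set Q := G.obj FDSemilat.chain3
  have h_card_chain : Nat.card FDSemilat.chain3 = 3 := Nat.card_fin 3
  have hA : Nat.card Q.A = 3 := le_antisymm
    (h_card_chain ▸ RObj.natCard_A_le_of_hom ((adj.homEquiv _ RObj.chain3).symm (𝟙 _)))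
    (h_card_chain ▸ Nat.card_le_card_of_injective _ (adj.unit.app FDSemilat.chain3).2.1)
  have hμ : Function.Injective Q.μ :=
    RObj.injective_μ_of_hom ((adj.homEquiv _ RObj.square).symm
      ⟨RObj.chainToSquare, RObj.isSupBotEmb_chainToSquare⟩) Function.injective_id
  obtain ⟨n, hn⟩ := Q.B.exists_natCard_eq_two_pow
  exact two_pow_ne_three n (hn ▸ (RObj.natCard_B_eq_natCard_A hμ).trans hA)

/-- The projection functor `Π : R → D` has neither a right adjoint nor a left adjoint. -/
theorem stmt4 :
    (¬ ∃ G : FDSemilat ⥤ RObj, Nonempty (projR ⊣ G)) ∧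
    (¬ ∃ G : FDSemilat ⥤ RObj, Nonempty (G ⊣ projR)) :=
  ⟨not_exists_rightAdjoint_projR, not_exists_leftAdjoint_projR⟩
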